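/- Let F₁,…,F_s : ℝⁿ → ℝ be continuously differentiable functions and suppose every point of the zero set Z := {F_{j₁} = 0, …, F_{j_k} = 0} ⊆ ℝⁿ is a point where (F_{j₁},…,F_{j_k}) is a submersion, and suppose moreover that Z ∩ closure({F₁ > 0, …, F_s > 0}) ∩ {F_j = 0} = ∅ for every index j ∉ {j₁,…,j_k} (maximality of the index set). Then Z ∩ closure({F₁ > 0, …, F_s > 0}) = Z ∩ {F_j > 0 for all j ∉ {j₁,…,j_k}}. -/

import Mathlib

/-!
On the closure all `F j` are nonnegative by continuity, and maximality rules out `F j = 0` for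
`j ∉ range J`. Conversely, at a point `x` of `Z` where the remaining `F j` are positive, surjectivity of the differential provides a direction
`v` along which every `F (J l)` has derivative `1`; moving from `x` a short time along `v` makes
the vanishing constraints positive while the others stay positive by continuity.
-/

open Set Filter Topology

variable {E : Type*} [NormedAddCommGroup E] [NormedSpace ℝ E]

theorem eventually_pos_along_of_fderiv_pos {f : E → ℝ} {x v : E} (hf : DifferentiableAt ℝ f x)
    (hx : f x = 0) (hv : 0 < fderiv ℝ f x v) :
    ∀ᶠ t in 𝓝[>] (0 : ℝ), 0 < f (x + t • v) := by
  have hline : HasDerivAt (fun t : ℝ => x + t • v) v 0 := by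
    simpa using ((hasDerivAt_id (0 : ℝ)).smul_const v).const_add x
  have hderiv : HasDerivAt (fun t : ℝ => f (x + t • v)) (fderiv ℝ f x v) 0 := by
    have hf' : HasFDerivAt f (fderiv ℝ f x) (x + (0 : ℝ) • v) := by simpa using hf.hasFDerivAt
    exact hf'.comp_hasDerivAt 0 hline
  have hsign := eventually_nhdsWithin_sign_eq_of_deriv_pos (hderiv.deriv ▸ hv) (by simpa using hx)
  filter_upwards [nhdsWithin_le_nhds hsign, self_mem_nhdsWithin] with t ht (htpos : 0 < t)
  rw [sub_zero, sign_pos htpos] at ht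
  exact sign_eq_one_iff.1 ht

theorem mem_closure_setOf_forall_pos {ι : Type*} [Finite ι] {f : ι → E → ℝ} {x v : E}
    (hf : ∀ i, DifferentiableAt ℝ (f i) x)
    (h : ∀ i, 0 < f i x ∨ (f i x = 0 ∧ 0 < fderiv ℝ (f i) x v)) :
    x ∈ closure {y | ∀ i, 0 < f i y} := by
  have hpos : ∀ i, ∀ᶠ t in 𝓝[>] (0 : ℝ), 0 < f i (x + t • v) := by
    intro i
    rcases h i with hxi | ⟨hxi, hvi⟩
    · have hcont : ContinuousAt (fun t : ℝ => f i (x + t • v)) 0 :=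
        (hf i).continuousAt.comp_of_eq (by fun_prop) (by simp)
      exact nhdsWithin_le_nhds (hcont.eventually (eventually_gt_nhds (by simpa using hxi)))
    · exact eventually_pos_along_of_fderiv_pos (hf i) hxi hvi
  have hlim : Tendsto (fun t : ℝ => x + t • v) (𝓝[>] 0) (𝓝 x) :=
    tendsto_nhdsWithin_of_tendsto_nhds (by simpa using (Continuous.tendsto (by fun_prop) 0 :
      Tendsto (fun t : ℝ => x + t • v) (𝓝 0) (𝓝 (x + (0 : ℝ) • v))))
  exact mem_closure_of_tendsto hlim (eventually_all.2 hpos)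

theorem exists_fderiv_apply_eq_of_surjective {ι : Type*} [Fintype ι] {p : ENNReal} [Fact (1 ≤ p)]
    {f : ι → E → ℝ} {x : E} (hf : ∀ i, DifferentiableAt ℝ (f i) x)
    (hsurj : Function.Surjective
      (fderiv ℝ (fun y => (WithLp.toLp p (fun i => f i y) : PiLp p fun _ : ι => ℝ)) x))
    (w : ι → ℝ) : ∃ v, ∀ i, fderiv ℝ (f i) x v = w i := by
  have hderiv : HasFDerivAt (fun y => (WithLp.toLp p (fun i => f i y) : PiLp p fun _ : ι => ℝ))
      ((PiLp.continuousLinearEquiv p ℝ _).symm.toContinuousLinearMap.comp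
        (ContinuousLinearMap.pi fun i => fderiv ℝ (f i) x)) x :=
    (PiLp.hasFDerivAt_toLp p (fun i => f i x)).comp x (hasFDerivAt_pi.2 fun i => (hf i).hasFDerivAt)
  obtain ⟨v, hv⟩ := hsurj (WithLp.toLp p w)
  rw [hderiv.fderiv] at hv
  exact ⟨v, fun i => congrArg (fun u : PiLp p (fun _ : ι => ℝ) => u i) hv⟩

theorem closure_strict_ineq_description_general (n s k : ℕ)
    (F : Fin s → EuclideanSpace ℝ (Fin n) → ℝ)
    (hF : ∀ j, ContDiff ℝ 1 (F j))
    (J : Fin k → Fin s)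
    (Z : Set (EuclideanSpace ℝ (Fin n)))
    (hZ : Z = {x | ∀ l, F (J l) x = 0})
    (hsubm : ∀ x ∈ Z, Function.Surjective
      (fderiv ℝ (fun y => (WithLp.toLp 2 (fun l => F (J l) y) : EuclideanSpace ℝ (Fin k))) x))
    (hmax : ∀ j, j ∉ Set.range J →
      Z ∩ closure {x | ∀ i, F i x > 0} ∩ {x | F j x = 0} = ∅) :
    Z ∩ closure {x | ∀ i, F i x > 0} =
      Z ∩ {x | ∀ j, j ∉ Set.range J → F j x > 0} := by
  ext x
  refine ⟨fun ⟨hxZ, hxcl⟩ => ⟨hxZ, fun j hj => ?_⟩, fun ⟨hxZ, hxpos⟩ => ⟨hxZ, ?_⟩⟩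
  · have hnonneg : 0 ≤ F j x :=
      closure_lt_subset_le continuous_const (hF j).continuous (closure_mono (fun y (hy : ∀ i, 0 < F i y) => hy j) hxcl)
    have hne : F j x ≠ 0 := fun h0 => (hmax j hj).subset ⟨⟨hxZ, hxcl⟩, h0⟩
    exact hnonneg.lt_of_ne' hne
  · have hdiff : ∀ i, DifferentiableAt ℝ (F i) x := fun i => (hF i).differentiable one_ne_zero x
    obtain ⟨v, hv⟩ := exists_fderiv_apply_eq_of_surjective (fun l => hdiff (J l)) (hsubm x hxZ) 1
    rw [hZ] at hxZ
    refine mem_closure_setOf_forall_pos (v := v) hdiff fun i => ?_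
    by_cases hi : i ∈ range J
    · obtain ⟨l, rfl⟩ := hi
      exact Or.inr ⟨hxZ l, by simp [hv l]⟩
    · exact Or.inl (hxpos i hi)

theorem closure_strict_ineq_description (n s k : ℕ)
    (F : Fin s → EuclideanSpace ℝ (Fin n) → ℝ)
    (hF : ∀ j, ContDiff ℝ 1 (F j))
    (J : Fin k → Fin s) (hJ : StrictMono J)
    (Z : Set (EuclideanSpace ℝ (Fin n)))
    (hZ : Z = {x | ∀ l, F (J l) x = 0})
    (hsubm : ∀ x ∈ Z, Function.Surjective
      (fderiv ℝ (fun y => (WithLp.toLp 2 (fun l => F (J l) y) : EuclideanSpace ℝ (Fin k))) x))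
    (hmax : ∀ j, j ∉ Set.range J →
      Z ∩ closure {x | ∀ i, F i x > 0} ∩ {x | F j x = 0} = ∅) :
    Z ∩ closure {x | ∀ i, F i x > 0} =
      Z ∩ {x | ∀ j, j ∉ Set.range J → F j x > 0} :=
  closure_strict_ineq_description_general n s k F hF J Z hZ hsubm hmax
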